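/- arXiv:2007.11397 — 3 statements merged into one kernel-verified Lean document; each statement's English description precedes it below -/
import Mathlib

section
/- Let X be a compact metric space and T a ξ-regular structure tree of X with constant α₀ > 0, i.e., every vertex of level k has diameter at most α₀ ξ^k and any two distinct vertices of level k are at distance at least α₀⁻¹ ξ^k, and every vertex is the union of its direct offsprings. Then the map sending each infinite path (v_k) in ∂T to the unique point in ⋂_k v_k is a bi-Lipschitz bijection from (∂T, d_ξ) to X; in particular X is Lipschitz equivalent to (∂T, d_ξ). -/
/-!
Every path `(u k)` is a decreasing sequence of nonempty closed sets in a compact space, so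
`⋂ k, u k` is nonempty; choosing a point of it defines `f`.  If two paths first differ at level
`q ≥ 1`, their points lie in distinct vertices of level `q`, hence are `≥ α₀⁻¹ ξ ^ q` apart, and in
the common vertex of level `q - 1`, hence are `≤ α₀ ξ ^ (q - 1)` apart.  The lower bound gives
injectivity; since every vertex is covered by its offsprings, every point lies on some path, and
the shrinking diameters force it to be the point of that path, which gives surjectivity.
-/

open Set Filter Topology

theorem eq_of_forall_dist_le_mul_pow {X : Type*} [MetricSpace X] {x y : X} {c ξ : ℝ}
    (hξ0 : 0 ≤ ξ) (hξ1 : ξ < 1) (h : ∀ k : ℕ, dist x y ≤ c * ξ ^ k) : x = y := by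
  have htend : Tendsto (fun k : ℕ => c * ξ ^ k) atTop (𝓝 0) := by
    simpa using (tendsto_pow_atTop_nhds_zero_of_lt_one hξ0 hξ1).const_mul c
  exact dist_le_zero.mp (ge_of_tendsto' htend h)

theorem dist_le_of_diam_le {X : Type*} [PseudoMetricSpace X] [CompactSpace X] {A : Set X}
    {a b : X} {D : ℝ} (hA : Metric.diam A ≤ D) (ha : a ∈ A) (hb : b ∈ A) : dist a b ≤ D :=
  (Metric.dist_le_diam_of_mem Metric.isBounded_of_compactSpace ha hb).trans hA

namespace StructureTree

variable {X : Type*} {vert : ℕ → Set (Set X)}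

variable (vert) in
abbrev Path : Type _ :=
  {u : ℕ → Set X // (∀ k, u k ∈ vert k) ∧ ∀ k, u (k + 1) ⊆ u k}

theorem exists_path_forall_mem (h0 : univ ∈ vert 0)
    (hcover : ∀ k, ∀ A ∈ vert k, A ⊆ ⋃₀ {B ∈ vert (k + 1) | B ⊆ A}) (x : X) :
    ∃ u : Path vert, ∀ k, x ∈ u.1 k := by
  have hstep : ∀ k A, A ∈ vert k → x ∈ A → ∃ B ∈ vert (k + 1), B ⊆ A ∧ x ∈ B := by
    intro k A hA hx
    obtain ⟨B, ⟨hB, hBA⟩, hxB⟩ := hcover k A hA hx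
    exact ⟨B, hB, hBA, hxB⟩
  choose! child hchild_mem hchild_sub hchild_x using hstep
  let u : ℕ → Set X := fun k => Nat.rec (motive := fun _ => Set X) univ child k
  have hu : ∀ k, u k ∈ vert k ∧ x ∈ u k := by
    intro k
    induction k with
    | zero => exact ⟨h0, mem_univ x⟩
    | succ k ih => exact ⟨hchild_mem k _ ih.1 ih.2, hchild_x k _ ih.1 ih.2⟩
  exact ⟨⟨u, fun k => (hu k).1, fun k => hchild_sub k _ (hu k).1 (hu k).2⟩, fun k => (hu k).2⟩

theorem exists_forall_mem_path [TopologicalSpace X] [CompactSpace X]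
    (hclosed : ∀ k, ∀ A ∈ vert k, IsClosed A) (hne : ∀ k, ∀ A ∈ vert k, A.Nonempty) :
    ∃ f : Path vert → X, ∀ u k, f u ∈ u.1 k := by
  have h : ∀ u : Path vert, (⋂ k, u.1 k).Nonempty := fun u =>
    IsCompact.nonempty_iInter_of_sequence_nonempty_isCompact_isClosed u.1 u.2.2
      (fun k => hne k _ (u.2.1 k)) (hclosed 0 _ (u.2.1 0)).isCompact
      (fun k => hclosed k _ (u.2.1 k))
  choose f hf using h
  exact ⟨f, fun u k => mem_iInter.mp (hf u) k⟩

namespace Path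

variable {u v : Path vert}

theorem nonempty_setOf_ne (huv : u ≠ v) : {k | u.1 k ≠ v.1 k}.Nonempty := by
  by_contra h
  exact huv (Subtype.ext (funext fun k => by_contra fun hk => h ⟨k, hk⟩))

theorem ne_at_sInf (huv : u ≠ v) :
    u.1 (sInf {k | u.1 k ≠ v.1 k}) ≠ v.1 (sInf {k | u.1 k ≠ v.1 k}) :=
  Nat.sInf_mem (nonempty_setOf_ne huv)

theorem eq_of_lt_sInf {m : ℕ} (hm : m < sInf {k | u.1 k ≠ v.1 k}) : u.1 m = v.1 m :=
  not_not.mp (Nat.notMem_of_lt_sInf hm)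

theorem sInf_pos (h0 : (vert 0).Subsingleton) (huv : u ≠ v) : 0 < sInf {k | u.1 k ≠ v.1 k} :=
  Nat.pos_of_ne_zero fun h => ne_at_sInf huv (by rw [h]; exact h0 (u.2.1 0) (v.2.1 0))

end Path

end StructureTree

open StructureTree

theorem structureTree_regular_biLipschitz_general
    {X : Type*} [MetricSpace X] [CompactSpace X]
    (vert : ℕ → Set (Set X))
    (hroot : vert 0 = {Set.univ})
    (hclosed : ∀ k, ∀ A ∈ vert k, IsClosed A)
    (hne : ∀ k, ∀ A ∈ vert k, A.Nonempty)
    (hcover : ∀ k, ∀ A ∈ vert k, A = ⋃₀ {B ∈ vert (k + 1) | B ⊆ A})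
    (ξ α₀ : ℝ) (hξ0 : 0 < ξ) (hξ1 : ξ < 1) (hα : 0 < α₀)
    (hdiam : ∀ k, ∀ A ∈ vert k, Metric.diam A ≤ α₀ * ξ ^ k)
    (hsep : ∀ k, ∀ A ∈ vert k, ∀ B ∈ vert k, A ≠ B →
      ∀ a ∈ A, ∀ b ∈ B, α₀⁻¹ * ξ ^ k ≤ dist a b) :
    ∃ f : {u : ℕ → Set X // (∀ k, u k ∈ vert k) ∧ ∀ k, u (k + 1) ⊆ u k} → X,
      (∀ u, ∀ k, f u ∈ u.1 k) ∧ Function.Bijective f ∧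
      ∃ C : ℝ, 0 < C ∧ ∀ u v, u ≠ v →
        C⁻¹ * ξ ^ sInf {k : ℕ | u.1 k ≠ v.1 k} ≤ dist (f u) (f v) ∧
        dist (f u) (f v) ≤ C * ξ ^ sInf {k : ℕ | u.1 k ≠ v.1 k} := by
  obtain ⟨f, hf⟩ := exists_forall_mem_path hclosed hne
  have hlow : ∀ u v : Path vert, u ≠ v →
      α₀⁻¹ * ξ ^ sInf {k | u.1 k ≠ v.1 k} ≤ dist (f u) (f v) := fun u v huv =>
    hsep _ _ (u.2.1 _) _ (v.2.1 _) (Path.ne_at_sInf huv) _ (hf u _) _ (hf v _)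
  have hinj : Function.Injective f := fun u v hfuv => by_contra fun huv => by
    have := hlow u v huv
    rw [hfuv, dist_self] at this
    exact this.not_gt (by positivity)
  have hsurj : Function.Surjective f := fun x => by
    obtain ⟨w, hw⟩ := exists_path_forall_mem (hroot ▸ rfl) (fun k A hA => (hcover k A hA).le) x
    exact ⟨w, eq_of_forall_dist_le_mul_pow hξ0.le hξ1
      fun k => dist_le_of_diam_le (hdiam k _ (w.2.1 k)) (hf w k) (hw k)⟩
  refine ⟨f, hf, ⟨hinj, hsurj⟩, α₀ / ξ, by positivity, fun u v huv => ⟨?_, ?_⟩⟩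
  · refine le_trans (mul_le_mul_of_nonneg_right ?_ (by positivity)) (hlow u v huv)
    rw [inv_div, div_le_iff₀ hα, inv_mul_cancel₀ hα.ne']
    exact hξ1.le
  · obtain ⟨m, hm⟩ : ∃ m, sInf {k | u.1 k ≠ v.1 k} = m + 1 :=
      Nat.exists_eq_add_one.mpr (Path.sInf_pos (hroot ▸ subsingleton_singleton) huv)
    have heq : u.1 m = v.1 m := Path.eq_of_lt_sInf (by omega)
    have hfv : f v ∈ u.1 m := heq ▸ hf v m
    calc dist (f u) (f v) ≤ α₀ * ξ ^ m := dist_le_of_diam_le (hdiam m _ (u.2.1 m)) (hf u m) hfv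
      _ = α₀ / ξ * ξ ^ (m + 1) := by field_simp; ring
      _ = α₀ / ξ * ξ ^ sInf {k | u.1 k ≠ v.1 k} := by rw [hm]

/-- **Regular structure trees give bi-Lipschitz models.**
Let `X` be a compact metric space and let `vert k` be the collection of vertices
(closed subsets of `X`) of level `k` of a structure tree of `X`: the root is `X`,
vertices of the same level are disjoint, each vertex has finitely many (at least one)
direct offsprings and equals the union of its direct offsprings.  If the tree is
`ξ`-regular with constant `α₀` (level-`k` vertices have diameter `≤ α₀ ξ^k` and are
`≥ α₀⁻¹ ξ^k` separated), then the map sending an infinite path `(v_k)` of the tree to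
the unique point of `⋂ v_k` is a bi-Lipschitz bijection from `(∂T, d_ξ)` onto `X`. -/
theorem structureTree_regular_biLipschitz
    {X : Type*} [MetricSpace X] [CompactSpace X]
    (vert : ℕ → Set (Set X))
    (hroot : vert 0 = {Set.univ})
    (hclosed : ∀ k, ∀ A ∈ vert k, IsClosed A)
    (hne : ∀ k, ∀ A ∈ vert k, A.Nonempty)
    (hdisj : ∀ k, (vert k).Pairwise fun A B => Disjoint A B)
    (hfin : ∀ k, ∀ A ∈ vert k, {B ∈ vert (k + 1) | B ⊆ A}.Finite)
    (hoff : ∀ k, ∀ A ∈ vert k, ∃ B ∈ vert (k + 1), B ⊆ A)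
    (hcover : ∀ k, ∀ A ∈ vert k, A = ⋃₀ {B ∈ vert (k + 1) | B ⊆ A})
    (ξ α₀ : ℝ) (hξ0 : 0 < ξ) (hξ1 : ξ < 1) (hα : 0 < α₀)
    (hdiam : ∀ k, ∀ A ∈ vert k, Metric.diam A ≤ α₀ * ξ ^ k)
    (hsep : ∀ k, ∀ A ∈ vert k, ∀ B ∈ vert k, A ≠ B →
      ∀ a ∈ A, ∀ b ∈ B, α₀⁻¹ * ξ ^ k ≤ dist a b) :
    ∃ f : {u : ℕ → Set X // (∀ k, u k ∈ vert k) ∧ ∀ k, u (k + 1) ⊆ u k} → X,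
      (∀ u, ∀ k, f u ∈ u.1 k) ∧ Function.Bijective f ∧
      ∃ C : ℝ, 0 < C ∧ ∀ u v, u ≠ v →
        C⁻¹ * ξ ^ sInf {k : ℕ | u.1 k ≠ v.1 k} ≤ dist (f u) (f v) ∧
        dist (f u) (f v) ≤ C * ξ ^ sInf {k : ℕ | u.1 k ≠ v.1 k} :=
  structureTree_regular_biLipschitz_general vert hroot hclosed hne hcover ξ α₀ hξ0 hξ1 hα hdiam hsep
end

section
/- Let S and T be rooted trees (each vertex having finitely many, at least one, direct offsprings) and suppose there exists a bundle map Δ from S to T. Then for every ξ ∈ (0,1), the boundaries (∂S, d_ξ) and (∂T, d_ξ) are Lipschitz equivalent, with a bi-Lipschitz bijection whose constant can be taken to be 1/ξ. -/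
/-!
A bundle map `Δ` induces a bijection `F` of boundaries: the level-`k` vertex of `F u` is the
common parent of the bundle `Δ (u (k + 1))`, which lies in the bundle `Δ (u k)`. Since the bundles
of a level partition it, `F u` and `F v` separate no later than `u` and `v` do, and, because the
level-`k` vertex of `F u` only depends on `u (k + 1)`, at most one level earlier. A shift of at
most one level in the separation level changes `d_ξ` by a factor between `ξ` and `1/ξ`.
-/

abbrev Boundary (V : ℕ → Type*) (par : ∀ k, V (k + 1) → V k) :=
  {u : ∀ k, V k // ∀ k, par k (u (k + 1)) = u k}

noncomputable def firstDiff {V : ℕ → Type*} (u v : ∀ k, V k) : ℕ :=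
  sInf {k : ℕ | u k ≠ v k}

open Classical in
noncomputable def prefixDist {V : ℕ → Type*} {par : ∀ k, V (k + 1) → V k} (ξ : ℝ)
    (u v : Boundary V par) : ℝ :=
  if u = v then 0 else ξ ^ firstDiff u.1 v.1

theorem firstDiff_le_add {V W : ℕ → Type*} {u v : ∀ k, V k} {u' v' : ∀ k, W k} {s : ℕ}
    (hne : u' ≠ v') (h : ∀ k, u' k ≠ v' k → u (k + s) ≠ v (k + s)) :
    firstDiff u v ≤ firstDiff u' v' + s := by
  obtain ⟨k, hk⟩ := Function.ne_iff.mp hne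
  exact Nat.sInf_le (h _ (Nat.sInf_mem (s := {k | u' k ≠ v' k}) ⟨k, hk⟩))

section PrefixDist

variable {V W : ℕ → Type*} {par : ∀ k, V (k + 1) → V k} {parW : ∀ k, W (k + 1) → W k}
  {ξ : ℝ}

theorem mul_prefixDist_le (hξ0 : 0 ≤ ξ) (hξ1 : ξ ≤ 1) {u v : Boundary V par}
    {u' v' : Boundary W parW} (heq : u = v ↔ u' = v')
    (h : u' ≠ v' → firstDiff u'.1 v'.1 ≤ firstDiff u.1 v.1 + 1) :
    ξ * prefixDist ξ u v ≤ prefixDist ξ u' v' := by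
  by_cases huv : u = v
  · simp [prefixDist, huv, heq.mp huv]
  · have hne : u' ≠ v' := mt heq.mpr huv
    simp only [prefixDist, if_neg huv, if_neg hne, ← pow_succ']
    exact pow_le_pow_of_le_one hξ0 hξ1 (h hne)

theorem prefixDist_biLipschitz_of_firstDiff_le_succ (hξ0 : 0 < ξ) (hξ1 : ξ ≤ 1)
    {f : Boundary V par → Boundary W parW} (hf : Function.Injective f)
    (hle : ∀ u v, u ≠ v → firstDiff (f u).1 (f v).1 ≤ firstDiff u.1 v.1 + 1)
    (hge : ∀ u v, u ≠ v → firstDiff u.1 v.1 ≤ firstDiff (f u).1 (f v).1 + 1)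
    (u v : Boundary V par) :
    ξ * prefixDist ξ u v ≤ prefixDist ξ (f u) (f v) ∧
      prefixDist ξ (f u) (f v) ≤ ξ⁻¹ * prefixDist ξ u v := by
  have heq : u = v ↔ f u = f v := hf.eq_iff.symm
  refine ⟨mul_prefixDist_le hξ0.le hξ1 heq fun h => hle u v (mt heq.mp h), ?_⟩
  rw [le_inv_mul_iff₀ hξ0]
  exact mul_prefixDist_le hξ0.le hξ1 heq.symm (hge u v)

end PrefixDist

structure IsBundleMap {VS VT : ℕ → Type*} (parS : ∀ k, VS (k + 1) → VS k)
    (parT : ∀ k, VT (k + 1) → VT k) (Δ : ∀ k, VS k → Set (VT k)) : Prop where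
  nonempty : ∀ k (u : VS k), (Δ k u).Nonempty
  parT_eq_parT : ∀ k (u : VS (k + 1)), ∀ w ∈ Δ (k + 1) u, ∀ w' ∈ Δ (k + 1) u,
    parT k w = parT k w'
  existsUnique_mem : ∀ k (w : VT k), ∃! u : VS k, w ∈ Δ k u
  parT_mem : ∀ k (u' : VS (k + 1)), ∀ w' ∈ Δ (k + 1) u', parT k w' ∈ Δ k (parS k u')

namespace IsBundleMap

variable {VS VT : ℕ → Type*} {parS : ∀ k, VS (k + 1) → VS k} {parT : ∀ k, VT (k + 1) → VT k}
  {Δ : ∀ k, VS k → Set (VT k)}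

theorem eq_of_mem (hΔ : IsBundleMap parS parT Δ) {k : ℕ} {u v : VS k} {w : VT k}
    (hu : w ∈ Δ k u) (hv : w ∈ Δ k v) : u = v :=
  (hΔ.existsUnique_mem k w).unique hu hv

variable (hΔ : IsBundleMap parS parT Δ)

noncomputable def bundleParent (k : ℕ) (u' : VS (k + 1)) : VT k :=
  parT k (hΔ.nonempty (k + 1) u').some

theorem parT_eq_bundleParent {k : ℕ} {u' : VS (k + 1)} {w : VT (k + 1)}
    (hw : w ∈ Δ (k + 1) u') : parT k w = hΔ.bundleParent k u' :=
  hΔ.parT_eq_parT k u' w hw _ (hΔ.nonempty (k + 1) u').some_mem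

theorem bundleParent_mem (k : ℕ) (u' : VS (k + 1)) :
    hΔ.bundleParent k u' ∈ Δ k (parS k u') :=
  hΔ.parT_mem k u' _ (hΔ.nonempty (k + 1) u').some_mem

noncomputable def boundaryMap (u : Boundary VS parS) : Boundary VT parT :=
  ⟨fun k => hΔ.bundleParent k (u.1 (k + 1)), fun k => by
    have hmem := hΔ.bundleParent_mem (k + 1) (u.1 (k + 2))
    rw [u.2 (k + 1)] at hmem
    exact hΔ.parT_eq_bundleParent hmem⟩

theorem boundaryMap_mem (u : Boundary VS parS) (k : ℕ) :
    (hΔ.boundaryMap u).1 k ∈ Δ k (u.1 k) := by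
  have hmem := hΔ.bundleParent_mem k (u.1 (k + 1))
  rwa [u.2 k] at hmem

theorem eq_of_boundaryMap_eq {u v : Boundary VS parS} {k : ℕ}
    (h : (hΔ.boundaryMap u).1 k = (hΔ.boundaryMap v).1 k) : u.1 k = v.1 k :=
  hΔ.eq_of_mem (hΔ.boundaryMap_mem u k) (h ▸ hΔ.boundaryMap_mem v k)

theorem boundaryMap_injective : Function.Injective hΔ.boundaryMap := fun _ _ h =>
  Subtype.ext <| funext fun _ => hΔ.eq_of_boundaryMap_eq (congrFun (congrArg Subtype.val h) _)

theorem boundaryMap_surjective : Function.Surjective hΔ.boundaryMap := by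
  intro w
  choose u hu _ using fun k => hΔ.existsUnique_mem k (w.1 k)
  have hpath : ∀ k, parS k (u (k + 1)) = u k := fun k =>
    hΔ.eq_of_mem (w.2 k ▸ hΔ.parT_mem k _ _ (hu (k + 1))) (hu k)
  refine ⟨⟨u, hpath⟩, Subtype.ext <| funext fun k => ?_⟩
  exact (hΔ.parT_eq_bundleParent (hu (k + 1))).symm.trans (w.2 k)

theorem firstDiff_boundaryMap_le {u v : Boundary VS parS} (huv : u ≠ v) :
    firstDiff (hΔ.boundaryMap u).1 (hΔ.boundaryMap v).1 ≤ firstDiff u.1 v.1 :=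
  firstDiff_le_add (s := 0) (Subtype.val_injective.ne huv) fun _ h => mt hΔ.eq_of_boundaryMap_eq h

theorem firstDiff_le_firstDiff_boundaryMap_add_one {u v : Boundary VS parS} (huv : u ≠ v) :
    firstDiff u.1 v.1 ≤ firstDiff (hΔ.boundaryMap u).1 (hΔ.boundaryMap v).1 + 1 :=
  firstDiff_le_add (Subtype.val_injective.ne (hΔ.boundaryMap_injective.ne huv))
    fun k h hk => h (congrArg (hΔ.bundleParent k) hk)

end IsBundleMap

open Classical in
theorem bundleMap_boundary_biLipschitz_general
    (VS VT : ℕ → Type*)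
    (parS : ∀ k, VS (k + 1) → VS k) (parT : ∀ k, VT (k + 1) → VT k)
    (Δ : ∀ k, VS k → Set (VT k))
    (hne : ∀ k, ∀ u : VS k, (Δ k u).Nonempty)
    (hbundle : ∀ k, ∀ u : VS (k + 1), ∀ w ∈ Δ (k + 1) u, ∀ w' ∈ Δ (k + 1) u,
      parT k w = parT k w')
    (hpart : ∀ k, ∀ w : VT k, ∃! u : VS k, w ∈ Δ k u)
    (hoffspring : ∀ k, ∀ u' : VS (k + 1), ∀ w' ∈ Δ (k + 1) u',
      parT k w' ∈ Δ k (parS k u'))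
    (ξ : ℝ) (hξ0 : 0 < ξ) (hξ1 : ξ < 1) :
    ∃ f : {u : ∀ k, VS k // ∀ k, parS k (u (k + 1)) = u k} →
        {w : ∀ k, VT k // ∀ k, parT k (w (k + 1)) = w k},
      Function.Bijective f ∧
      ∀ u v, ξ * (if u = v then (0 : ℝ) else ξ ^ sInf {k : ℕ | u.1 k ≠ v.1 k})
          ≤ (if f u = f v then (0 : ℝ) else ξ ^ sInf {k : ℕ | (f u).1 k ≠ (f v).1 k}) ∧
        (if f u = f v then (0 : ℝ) else ξ ^ sInf {k : ℕ | (f u).1 k ≠ (f v).1 k})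
          ≤ ξ⁻¹ * (if u = v then (0 : ℝ) else ξ ^ sInf {k : ℕ | u.1 k ≠ v.1 k}) := by
  have hΔ : IsBundleMap parS parT Δ := ⟨hne, hbundle, hpart, hoffspring⟩
  refine ⟨hΔ.boundaryMap, ⟨hΔ.boundaryMap_injective, hΔ.boundaryMap_surjective⟩, ?_⟩
  exact prefixDist_biLipschitz_of_firstDiff_le_succ hξ0 hξ1.le hΔ.boundaryMap_injective
    (fun _ _ huv => (hΔ.firstDiff_boundaryMap_le huv).trans (Nat.le_succ _))
    (fun _ _ huv => hΔ.firstDiff_le_firstDiff_boundaryMap_add_one huv)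

open Classical in
theorem bundleMap_boundary_biLipschitz
    (VS VT : ℕ → Type*) [∀ k, Finite (VS k)] [∀ k, Finite (VT k)]
    [Unique (VS 0)] [Unique (VT 0)]
    (parS : ∀ k, VS (k + 1) → VS k) (parT : ∀ k, VT (k + 1) → VT k)
    (hSoff : ∀ k, ∀ v : VS k, ∃ w, parS k w = v)
    (hToff : ∀ k, ∀ v : VT k, ∃ w, parT k w = v)
    (Δ : ∀ k, VS k → Set (VT k))
    (hne : ∀ k, ∀ u : VS k, (Δ k u).Nonempty)
    (hbundle : ∀ k, ∀ u : VS (k + 1), ∀ w ∈ Δ (k + 1) u, ∀ w' ∈ Δ (k + 1) u,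
      parT k w = parT k w')
    (hpart : ∀ k, ∀ w : VT k, ∃! u : VS k, w ∈ Δ k u)
    (hoffspring : ∀ k, ∀ u' : VS (k + 1), ∀ w' ∈ Δ (k + 1) u',
      parT k w' ∈ Δ k (parS k u'))
    (ξ : ℝ) (hξ0 : 0 < ξ) (hξ1 : ξ < 1) :
    ∃ f : {u : ∀ k, VS k // ∀ k, parS k (u (k + 1)) = u k} →
        {w : ∀ k, VT k // ∀ k, parT k (w (k + 1)) = w k},
      Function.Bijective f ∧
      ∀ u v, ξ * (if u = v then (0 : ℝ) else ξ ^ sInf {k : ℕ | u.1 k ≠ v.1 k})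
          ≤ (if f u = f v then (0 : ℝ) else ξ ^ sInf {k : ℕ | (f u).1 k ≠ (f v).1 k}) ∧
        (if f u = f v then (0 : ℝ) else ξ ^ sInf {k : ℕ | (f u).1 k ≠ (f v).1 k})
          ≤ ξ⁻¹ * (if u = v then (0 : ℝ) else ξ ^ sInf {k : ℕ | u.1 k ≠ v.1 k}) :=
  bundleMap_boundary_biLipschitz_general VS VT parS parT Δ hne hbundle hpart hoffspring ξ hξ0 hξ1
end

section
/- With 𝒟, ℰ, N, s, ℓ as in the uniform-horizontal-fibers setting, for every k ≥ 0 each approximate square of rank k has exactly N·s^{ℓ(k+1)−ℓ(k)−1} direct offsprings (approximate squares of rank k+1 contained in it), regardless of whether ℓ(k) > k or ℓ(k) = k. -/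
/-!
An offspring of `(x, y)` is determined by its new letters: the last letter `u` of `x'` and the
block `z` of `ℓ(k+1) - ℓ(k)` letters appended to `y`. If `ℓ(k) > k`, the letter `y_{k+1}` is
already fixed (index `k` in Lean), so `u` runs over its fibre in `𝒟`, of size `N / s`, and `z` over
`ℰ^{ℓ(k+1)-ℓ(k)}`. If `ℓ(k) = k`, the pair formed by `u` and the first letter of `z` runs over
`𝒟` and the rest of `z` over `ℰ`. Both counts equal `N·s^{ℓ(k+1)-ℓ(k)-1}`. Since
`log n / log m ≥ 1`, `ℓ` is strictly increasing, which gives `k ≤ ℓ(k) < ℓ(k+1)`.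
-/

open Function Finset

theorem Nat.card_subtype_prod {α β : Type*} (p : α → Prop) (q : β → Prop) :
    Nat.card {c : α × β // p c.1 ∧ q c.2} = Nat.card {a // p a} * Nat.card {b // q b} := by
  rw [Nat.card_congr Equiv.subtypeProdEquivProd, Nat.card_prod]

theorem Nat.card_fin_pi_subtype_mem {β : Type*} (E : Finset β) (d : ℕ) :
    Nat.card {z : Fin d → β // ∀ i, z i ∈ E} = #E ^ d := by
  rw [Nat.card_congr Equiv.subtypePiEquivPi, Nat.card_fun, Nat.card_eq_finsetCard, Nat.card_fin]

theorem Finset.natCard_subtype_mk_mem {α β : Type*} [DecidableEq β] (D : Finset (α × β))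
    (c : β) : Nat.card {u // (u, c) ∈ D} = #(D.filter fun d => d.2 = c) := by
  rw [← Nat.card_eq_finsetCard]
  refine Nat.card_congr
    { toFun u := ⟨(u, c), mem_filter.2 ⟨u.2, rfl⟩⟩
      invFun d := ⟨d.1.1, ?_⟩
      left_inv u := rfl
      right_inv d := ?_ }
  · obtain ⟨hd, hc⟩ := mem_filter.1 d.2
    simpa [← hc] using hd
  · obtain ⟨-, hc⟩ := mem_filter.1 d.2
    exact Subtype.ext (Prod.ext rfl hc.symm)

theorem Function.Injective.card_subtype_and_mem_range {γ δ : Type*} {f : γ → δ}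
    (hf : Injective f) (P : δ → Prop) :
    Nat.card {a // P a ∧ a ∈ Set.range f} = Nat.card {c // P (f c)} := by
  have := Nat.card_image_of_injective hf (f ⁻¹' {a | P a})
  rwa [Set.image_preimage_eq_inter_range] at this

theorem Fin.append_right_injective {α : Type*} {m : ℕ} (x : Fin m → α) (n : ℕ) :
    Injective (Fin.append x : (Fin n → α) → Fin (m + n) → α) := fun z z' h =>
  funext fun i => by simpa using congr_fun h (Fin.natAdd m i)

theorem Fin.mem_range_append_iff {α : Type*} {m n : ℕ} (x : Fin m → α) (w : Fin (m + n) → α) :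
    w ∈ Set.range (Fin.append x : (Fin n → α) → Fin (m + n) → α) ↔
      ∀ j : Fin (m + n), ∀ h : (j : ℕ) < m, w j = x ⟨j, h⟩ := by
  constructor
  · rintro ⟨z, rfl⟩ j h
    exact Fin.append_left x z ⟨j, h⟩
  · intro h
    refine ⟨fun i => w (Fin.natAdd m i), ?_⟩
    conv_rhs => rw [← Fin.append_castAdd_natAdd (f := w)]
    congr
    funext i
    exact (h (Fin.castAdd n i) i.isLt).symm

theorem Fin.mem_range_snoc_iff {α : Type*} {m : ℕ} (x : Fin m → α) (w : Fin (m + 1) → α) :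
    w ∈ Set.range (fun u : α => (Fin.snoc x u : Fin (m + 1) → α)) ↔
      ∀ j : Fin (m + 1), ∀ h : (j : ℕ) < m, w j = x ⟨j, h⟩ := by
  constructor
  · rintro ⟨u, rfl⟩ j h
    simp [Fin.snoc, h, Fin.castLT]
  · intro h
    refine ⟨w (Fin.last m), ?_⟩
    beta_reduce
    conv_rhs => rw [← Fin.snoc_init_self w]
    congr 1
    funext i
    exact (h (Fin.castSucc i) i.isLt).symm

theorem card_extensions_eq_card_snoc_append {α β : Type*} {k L e : ℕ}
    (P : (Fin (k + 1) → α) × (Fin (L + e) → β) → Prop) (x : Fin k → α) (y : Fin L → β) :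
    Nat.card {p : (Fin (k + 1) → α) × (Fin (L + e) → β) // P p ∧
        (∀ j : Fin (k + 1), ∀ h : (j : ℕ) < k, p.1 j = x ⟨j, h⟩) ∧
        (∀ j : Fin (L + e), ∀ h : (j : ℕ) < L, p.2 j = y ⟨j, h⟩)} =
      Nat.card {q : α × (Fin e → β) // P (Fin.snoc x q.1, Fin.append y q.2)} := by
  have hf := (Fin.snoc_right_injective (α := fun _ => α) x).prodMap
    (Fin.append_right_injective y e)
  refine (Nat.card_congr (Equiv.subtypeEquivRight fun p => and_congr_right' ?_)).trans
    (hf.card_subtype_and_mem_range P)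
  rw [Set.range_prodMap, Set.mem_prod, Fin.mem_range_snoc_iff, Fin.mem_range_append_iff]

theorem strictMono_floor_nat_mul {R : Type*} [Semiring R] [LinearOrder R] [IsStrictOrderedRing R]
    [FloorSemiring R] {r : R} (hr : 1 ≤ r) : StrictMono fun k : ℕ => ⌊(k : R) * r⌋₊ :=
  strictMono_nat_of_lt_succ fun k => calc
    ⌊(k : R) * r⌋₊ < ⌊(k : R) * r⌋₊ + 1 := Nat.lt_succ_self _
    _ = ⌊(k : R) * r + 1⌋₊ := (Nat.floor_add_one (by positivity)).symm
    _ ≤ ⌊((k + 1 : ℕ) : R) * r⌋₊ := Nat.floor_le_floor (by push_cast; rw [add_one_mul]; gcongr)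

namespace ApproxSquare

variable {α β : Type*} (D : Finset (α × β)) (E : Finset β) {k L : ℕ}

def IsAdmissibleLetter (x : Fin k → α) (j : ℕ) (b : β) : Prop :=
  if h : j < k then (x ⟨j, h⟩, b) ∈ D else b ∈ E

def IsApproxSquare (x : Fin k → α) (y : Fin L → β) : Prop :=
  ∀ j : Fin L, IsAdmissibleLetter D E x j (y j)

variable {D E}

theorem isAdmissibleLetter_of_le {x : Fin k → α} {j : ℕ} (hj : k ≤ j) {b : β} :
    IsAdmissibleLetter D E x j b ↔ b ∈ E := by
  rw [IsAdmissibleLetter, dif_neg (by omega)]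

theorem isAdmissibleLetter_snoc_self (x : Fin k → α) (u : α) (b : β) :
    IsAdmissibleLetter D E (Fin.snoc x u : Fin (k + 1) → α) k b ↔ (u, b) ∈ D := by
  rw [IsAdmissibleLetter, dif_pos k.lt_succ_self]
  simp [Fin.snoc]

theorem isAdmissibleLetter_snoc_of_ne (x : Fin k → α) (u : α) {j : ℕ} (hj : j ≠ k) (b : β) :
    IsAdmissibleLetter D E (Fin.snoc x u : Fin (k + 1) → α) j b ↔
      IsAdmissibleLetter D E x j b := by
  unfold IsAdmissibleLetter
  by_cases h : j < k
  · simp [h, Nat.lt_succ_of_lt h, Fin.snoc]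
  · rw [dif_neg h, dif_neg (by omega)]

theorem isApproxSquare_append_iff (x : Fin k → α) (y : Fin L → β) {e : ℕ} (z : Fin e → β) :
    IsApproxSquare D E x (Fin.append y z) ↔
      IsApproxSquare D E x y ∧ ∀ i : Fin e, IsAdmissibleLetter D E x (L + i) (z i) := by
  simp [IsApproxSquare, Fin.forall_fin_add]

theorem isApproxSquare_snoc_iff_of_lt {x : Fin k → α} {y : Fin L → β}
    (hxy : IsApproxSquare D E x y) (hk : k < L) (u : α) :
    IsApproxSquare D E (Fin.snoc x u : Fin (k + 1) → α) y ↔ (u, y ⟨k, hk⟩) ∈ D := by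
  refine ⟨fun h => (isAdmissibleLetter_snoc_self x u _).1 (h ⟨k, hk⟩), fun h j => ?_⟩
  by_cases hj : (j : ℕ) = k
  · obtain rfl : j = ⟨k, hk⟩ := Fin.ext hj
    exact (isAdmissibleLetter_snoc_self x u _).2 h
  · exact (isAdmissibleLetter_snoc_of_ne x u hj _).2 (hxy j)

theorem isApproxSquare_snoc_append_iff_of_lt {x : Fin k → α} {y : Fin L → β}
    (hxy : IsApproxSquare D E x y) (hk : k < L) (u : α) {e : ℕ} (z : Fin e → β) :
    IsApproxSquare D E (Fin.snoc x u : Fin (k + 1) → α) (Fin.append y z) ↔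
      (u, y ⟨k, hk⟩) ∈ D ∧ ∀ i, z i ∈ E := by
  rw [isApproxSquare_append_iff, isApproxSquare_snoc_iff_of_lt hxy hk]
  exact and_congr_right' (forall_congr' fun i => isAdmissibleLetter_of_le (by omega))

theorem isApproxSquare_snoc_append_cons_iff {x : Fin k → α} {y : Fin k → β}
    (hxy : IsApproxSquare D E x y) (u : α) (v : β) {e : ℕ} (z : Fin e → β) :
    IsApproxSquare D E (Fin.snoc x u : Fin (k + 1) → α) (Fin.append y (Fin.cons v z)) ↔
      (u, v) ∈ D ∧ ∀ i, z i ∈ E := by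
  have hsnoc : IsApproxSquare D E (Fin.snoc x u : Fin (k + 1) → α) y := fun j =>
    (isAdmissibleLetter_snoc_of_ne x u j.isLt.ne _).2 (hxy j)
  rw [isApproxSquare_append_iff, and_iff_right hsnoc, Fin.forall_fin_succ]
  simp only [Fin.cons_zero, Fin.cons_succ, Fin.val_zero, add_zero, Fin.val_succ,
    isAdmissibleLetter_snoc_self]
  refine and_congr_right' (forall_congr' fun i => ?_)
  rw [isAdmissibleLetter_snoc_of_ne x u (by omega), isAdmissibleLetter_of_le (by omega)]

theorem card_offsprings [DecidableEq β]
    (hunif : ∀ c ∈ E, #(D.filter fun d => d.2 = c) * #E = #D)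
    (hkL : k ≤ L) {x : Fin k → α} {y : Fin L → β} (hxy : IsApproxSquare D E x y) (d : ℕ) :
    Nat.card {p : (Fin (k + 1) → α) × (Fin (L + (d + 1)) → β) //
        IsApproxSquare D E p.1 p.2 ∧
        (∀ j : Fin (k + 1), ∀ h : (j : ℕ) < k, p.1 j = x ⟨j, h⟩) ∧
        (∀ j : Fin (L + (d + 1)), ∀ h : (j : ℕ) < L, p.2 j = y ⟨j, h⟩)} = #D * #E ^ d := by
  rw [card_extensions_eq_card_snoc_append]
  dsimp only
  rcases hkL.lt_or_eq with hk | rfl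
  · have hyk : y ⟨k, hk⟩ ∈ E := (isAdmissibleLetter_of_le le_rfl).1 (hxy ⟨k, hk⟩)
    simp only [isApproxSquare_snoc_append_iff_of_lt hxy hk]
    rw [Nat.card_subtype_prod (fun u => (u, y ⟨k, hk⟩) ∈ D)
        (fun z : Fin (d + 1) → β => ∀ i, z i ∈ E),
      natCard_subtype_mk_mem, Nat.card_fin_pi_subtype_mem, pow_succ', ← mul_assoc, hunif _ hyk]
  · let e : (α × β) × (Fin d → β) ≃ α × (Fin (d + 1) → β) :=
      (Equiv.prodAssoc α β (Fin d → β)).trans ((Equiv.refl α).prodCongr (Fin.consEquiv fun _ => β))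
    rw [← Nat.card_congr (e.subtypeEquiv (p := fun r => r.1 ∈ D ∧ ∀ i, r.2 i ∈ E) fun r =>
        (isApproxSquare_snoc_append_cons_iff hxy r.1.1 r.1.2 r.2).symm),
      Nat.card_subtype_prod (· ∈ D) (fun z : Fin d → β => ∀ i, z i ∈ E),
      Nat.card_eq_finsetCard, Nat.card_fin_pi_subtype_mem]

end ApproxSquare

theorem card_direct_offsprings_general (n m : ℕ) (hm : 2 ≤ m) (hmn : m < n)
    (D : Finset (Fin n × Fin m))
    (E : Finset (Fin m))
    (s : ℕ) (hs : s = E.card)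
    (hunif : ∀ j ∈ E, (D.filter fun d => d.2 = j).card * s = D.card)
    (ℓ : ℕ → ℕ) (hℓ : ∀ k, ℓ k = ⌊(k : ℝ) * Real.log n / Real.log m⌋₊)
    (k : ℕ) (x : Fin k → Fin n) (y : Fin (ℓ k) → Fin m)
    (hxy : ∀ j : Fin (ℓ k), if h : (j : ℕ) < k then (x ⟨j, h⟩, y j) ∈ D else y j ∈ E) :
    Nat.card {p : (Fin (k + 1) → Fin n) × (Fin (ℓ (k + 1)) → Fin m) //
        (∀ j : Fin (ℓ (k + 1)),
          if h : (j : ℕ) < k + 1 then (p.1 ⟨j, h⟩, p.2 j) ∈ D else p.2 j ∈ E) ∧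
        (∀ j : Fin (k + 1), ∀ h : (j : ℕ) < k, p.1 j = x ⟨j, h⟩) ∧
        (∀ j : Fin (ℓ (k + 1)), ∀ h : (j : ℕ) < ℓ k, p.2 j = y ⟨j, h⟩)}
      = D.card * s ^ (ℓ (k + 1) - ℓ k - 1) := by
  have hr : 1 ≤ Real.log n / Real.log m := by
    have hm' : (1 : ℝ) < m := by exact_mod_cast (by omega : 1 < m)
    rw [one_le_div (Real.log_pos hm')]
    exact Real.log_le_log (by positivity) (by exact_mod_cast hmn.le)
  have hmono : StrictMono ℓ := by
    convert strictMono_floor_nat_mul hr using 2 with i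
    rw [hℓ, mul_div_assoc]
  obtain ⟨d, hd⟩ : ∃ d, ℓ (k + 1) = ℓ k + (d + 1) :=
    ⟨ℓ (k + 1) - ℓ k - 1, by have := hmono (lt_add_one k); omega⟩
  rw [hd, show ℓ k + (d + 1) - ℓ k - 1 = d by omega]
  subst hs
  exact ApproxSquare.card_offsprings hunif (hmono.id_le k) hxy d

/-- **Number of direct offsprings of an approximate square.**
With `𝒟, ℰ, N, s, ℓ` as in the uniform-horizontal-fibers setting, every approximate
square of rank `k` (a pair of words `(x, y)` with `(x_j, y_j) ∈ 𝒟` for `j ≤ k` and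
`y_j ∈ ℰ` for `j > k`) has exactly `N·s^{ℓ(k+1)−ℓ(k)−1}` direct offsprings, i.e.
approximate squares of rank `k+1` extending it, regardless of whether `ℓ(k) > k`
or `ℓ(k) = k`. -/
theorem card_direct_offsprings (n m : ℕ) (hm : 2 ≤ m) (hmn : m < n)
    (D : Finset (Fin n × Fin m)) (hN : 1 < D.card)
    (E : Finset (Fin m)) (hE : E = D.image Prod.snd)
    (s : ℕ) (hs : s = E.card)
    (hunif : ∀ j ∈ E, (D.filter fun d => d.2 = j).card * s = D.card)
    (ℓ : ℕ → ℕ) (hℓ : ∀ k, ℓ k = ⌊(k : ℝ) * Real.log n / Real.log m⌋₊)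
    (k : ℕ) (x : Fin k → Fin n) (y : Fin (ℓ k) → Fin m)
    (hxy : ∀ j : Fin (ℓ k), if h : (j : ℕ) < k then (x ⟨j, h⟩, y j) ∈ D else y j ∈ E) :
    Nat.card {p : (Fin (k + 1) → Fin n) × (Fin (ℓ (k + 1)) → Fin m) //
        (∀ j : Fin (ℓ (k + 1)),
          if h : (j : ℕ) < k + 1 then (p.1 ⟨j, h⟩, p.2 j) ∈ D else p.2 j ∈ E) ∧
        (∀ j : Fin (k + 1), ∀ h : (j : ℕ) < k, p.1 j = x ⟨j, h⟩) ∧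
        (∀ j : Fin (ℓ (k + 1)), ∀ h : (j : ℕ) < ℓ k, p.2 j = y ⟨j, h⟩)}
      = D.card * s ^ (ℓ (k + 1) - ℓ k - 1) :=
  card_direct_offsprings_general n m hm hmn D E s hs hunif ℓ hℓ k x y hxy
end
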